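/- Under Łukasiewicz semantics, let A be an atomic concept and C a concept in which A does not occur, and let 𝒜 be a fuzzy ABox (a finite set of assertion axioms of the forms ⟨a:E ≥ α⟩, ⟨a:E ≤ α⟩, ⟨(a,b):R ≥ α⟩). Let 𝒜* be the ABox obtained from 𝒜 by replacing, in every concept occurring in 𝒜, every occurrence of A by C. Then 𝒜 ∪ {⟨A ⊑ C ≥ 1⟩, ⟨C ⊑ A ≥ 1⟩} is satisfiable iff 𝒜* is satisfiable; moreover the same equivalence holds for satisfiability in interpretations with finite domain. -/

import Mathlib

/-- ALC concepts over countably many atomic concepts and role names. -/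
inductive MConcept : Type where
  | atom : ℕ → MConcept
  | top  : MConcept
  | bot  : MConcept
  | conj : MConcept → MConcept → MConcept
  | disj : MConcept → MConcept → MConcept
  | neg  : MConcept → MConcept
  | all  : ℕ → MConcept → MConcept
  | ex   : ℕ → MConcept → MConcept
deriving DecidableEq

/-- Łukasiewicz t-norm. -/
def lukT (x y : ℝ) : ℝ := max (x + y - 1) 0
/-- Łukasiewicz t-conorm. -/
def lukS (x y : ℝ) : ℝ := min (x + y) 1
/-- Łukasiewicz implication. -/
def lukImp (x y : ℝ) : ℝ := min (1 - x + y) 1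

/-- A fuzzy interpretation. -/
structure Interp : Type 1 where
  Δ : Type
  nonempty : Nonempty Δ
  atom : ℕ → Δ → ℝ
  role : ℕ → Δ → Δ → ℝ
  ind : ℕ → Δ
  atom_mem : ∀ i x, atom i x ∈ Set.Icc (0:ℝ) 1
  role_mem : ∀ j x y, role j x y ∈ Set.Icc (0:ℝ) 1

/-- Value of a concept at a point under Łukasiewicz semantics. -/
noncomputable def lval (I : Interp) : MConcept → I.Δ → ℝ
  | MConcept.atom i, x => I.atom i x
  | MConcept.top, _ => 1
  | MConcept.bot, _ => 0
  | MConcept.conj C D, x => lukT (lval I C x) (lval I D x)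
  | MConcept.disj C D, x => lukS (lval I C x) (lval I D x)
  | MConcept.neg C, x => 1 - lval I C x
  | MConcept.all j C, x => ⨅ y, lukImp (I.role j x y) (lval I C y)
  | MConcept.ex j C, x => ⨆ y, lukT (I.role j x y) (lval I C y)

/-- Degree of subsumption `(C ⊑ D)^I`. -/
noncomputable def lsub (I : Interp) (C D : MConcept) : ℝ :=
  ⨅ x, lukImp (lval I C x) (lval I D x)

/-- Axioms of fuzzy knowledge bases. -/
inductive KAxiom : Type where
  | assertGE : ℕ → MConcept → ℚ → KAxiom   -- ⟨a : C ≥ α⟩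
  | assertLE : ℕ → MConcept → ℚ → KAxiom   -- ⟨a : C ≤ α⟩
  | roleGE : ℕ → ℕ → ℕ → ℚ → KAxiom        -- ⟨(a,b) : R ≥ α⟩
  | gci : MConcept → MConcept → ℚ → KAxiom -- ⟨C ⊑ D ≥ α⟩
deriving DecidableEq

/-- The rational constant of an axiom lies in `[0,1]`. -/
def axBounded : KAxiom → Prop
  | KAxiom.assertGE _ _ q => 0 ≤ q ∧ q ≤ 1
  | KAxiom.assertLE _ _ q => 0 ≤ q ∧ q ≤ 1
  | KAxiom.roleGE _ _ _ q => 0 ≤ q ∧ q ≤ 1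
  | KAxiom.gci _ _ q => 0 ≤ q ∧ q ≤ 1

/-- Satisfaction of an axiom in an interpretation. -/
def lsat (I : Interp) : KAxiom → Prop
  | KAxiom.assertGE a C q => (q : ℝ) ≤ lval I C (I.ind a)
  | KAxiom.assertLE a C q => lval I C (I.ind a) ≤ (q : ℝ)
  | KAxiom.roleGE a b j q => (q : ℝ) ≤ I.role j (I.ind a) (I.ind b)
  | KAxiom.gci C D q => (q : ℝ) ≤ lsub I C D

/-- Satisfaction of a set of axioms. -/
def lsatKB (I : Interp) (K : Finset KAxiom) : Prop := ∀ ax ∈ K, lsat I ax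

/-- Witnessed interpretation: all the relevant infima and suprema are attained. -/
def lWitnessed (I : Interp) : Prop :=
  ∀ (C D : MConcept) (j : ℕ) (x : I.Δ),
    (∃ y, lval I (MConcept.ex j C) x = lukT (I.role j x y) (lval I C y)) ∧
    (∃ y, lval I (MConcept.all j C) x = lukImp (I.role j x y) (lval I C y)) ∧
    (∃ y, lsub I C D = lukImp (lval I C y) (lval I D y))

/-- The atomic concept `A_i` occurs in a concept. -/
def occursC (i : ℕ) : MConcept → Prop
  | MConcept.atom i' => i = i'
  | MConcept.top => False
  | MConcept.bot => False
  | MConcept.conj C D => occursC i C ∨ occursC i D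
  | MConcept.disj C D => occursC i C ∨ occursC i D
  | MConcept.neg C => occursC i C
  | MConcept.all _ C => occursC i C
  | MConcept.ex _ C => occursC i C

/-- The atomic concept `A_i` occurs in an axiom. -/
def occursA (i : ℕ) : KAxiom → Prop
  | KAxiom.assertGE _ C _ => occursC i C
  | KAxiom.assertLE _ C _ => occursC i C
  | KAxiom.roleGE _ _ _ _ => False
  | KAxiom.gci C D _ => occursC i C ∨ occursC i D

/-- Replace every occurrence of the atomic concept `A_i` by `C` in a concept. -/
def substC (i : ℕ) (C : MConcept) : MConcept → MConcept
  | MConcept.atom i' => if i' = i then C else MConcept.atom i'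
  | MConcept.top => MConcept.top
  | MConcept.bot => MConcept.bot
  | MConcept.conj D E => MConcept.conj (substC i C D) (substC i C E)
  | MConcept.disj D E => MConcept.disj (substC i C D) (substC i C E)
  | MConcept.neg D => MConcept.neg (substC i C D)
  | MConcept.all j D => MConcept.all j (substC i C D)
  | MConcept.ex j D => MConcept.ex j (substC i C D)

/-- Replace every occurrence of the atomic concept `A_i` by `C` in an axiom. -/
def substAx (i : ℕ) (C : MConcept) : KAxiom → KAxiom
  | KAxiom.assertGE a E q => KAxiom.assertGE a (substC i C E) q
  | KAxiom.assertLE a E q => KAxiom.assertLE a (substC i C E) q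
  | KAxiom.roleGE a b j q => KAxiom.roleGE a b j q
  | KAxiom.gci D E q => KAxiom.gci (substC i C D) (substC i C E) q

/-- An axiom is an assertion axiom (i.e. not a GCI). -/
def isAssertion : KAxiom → Prop
  | KAxiom.gci _ _ _ => False
  | _ => True

/-!
Two GCIs of degree 1 say that `A_i` and `C` take the same value at every point, so in any
model of them replacing `A_i` by `C` changes no value. Conversely, given a model of the
substituted ABox, reinterpret `A_i` as the value of `C`: since `A_i` does not occur in `C`,
the value of `C` is unchanged, so the GCIs hold, and by the substitution lemma every
concept `E` takes in the new interpretation the value that `E[A_i := C]` had in the old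
one. The domain is untouched, so finiteness is preserved.
-/

lemma lukT_mem {x y : ℝ} (hx : x ∈ Set.Icc (0:ℝ) 1) (hy : y ∈ Set.Icc (0:ℝ) 1) :
    lukT x y ∈ Set.Icc (0:ℝ) 1 :=
  ⟨le_max_right _ _, max_le (by linarith [hx.2, hy.2]) zero_le_one⟩

lemma lukS_mem {x y : ℝ} (hx : x ∈ Set.Icc (0:ℝ) 1) (hy : y ∈ Set.Icc (0:ℝ) 1) :
    lukS x y ∈ Set.Icc (0:ℝ) 1 :=
  ⟨le_min (by linarith [hx.1, hy.1]) zero_le_one, min_le_right _ _⟩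

lemma lukImp_mem {x y : ℝ} (hx : x ∈ Set.Icc (0:ℝ) 1) (hy : y ∈ Set.Icc (0:ℝ) 1) :
    lukImp x y ∈ Set.Icc (0:ℝ) 1 :=
  ⟨le_min (by linarith [hx.2, hy.1]) zero_le_one, min_le_right _ _⟩

lemma one_le_lukImp_iff {x y : ℝ} : 1 ≤ lukImp x y ↔ x ≤ y := by
  rw [lukImp, le_min_iff]
  exact ⟨fun h => by linarith [h.1], fun h => ⟨by linarith, le_rfl⟩⟩

lemma lval_mem (I : Interp) (E : MConcept) (x : I.Δ) : lval I E x ∈ Set.Icc (0:ℝ) 1 := by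
  have := I.nonempty
  induction E generalizing x with
  | atom i => exact I.atom_mem i x
  | top => simp [lval]
  | bot => simp [lval]
  | conj D E ihD ihE => exact lukT_mem (ihD x) (ihE x)
  | disj D E ihD ihE => exact lukS_mem (ihD x) (ihE x)
  | neg D ih => simpa [lval, and_comm] using ih x
  | all j D ih =>
    have hmem y := lukImp_mem (I.role_mem j x y) (ih y)
    obtain ⟨y⟩ := I.nonempty
    exact ⟨le_ciInf fun y => (hmem y).1,
      ciInf_le_of_le ⟨0, Set.forall_mem_range.2 fun y => (hmem y).1⟩ y (hmem y).2⟩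
  | ex j D ih =>
    have hmem y := lukT_mem (I.role_mem j x y) (ih y)
    obtain ⟨y⟩ := I.nonempty
    exact ⟨le_ciSup_of_le ⟨1, Set.forall_mem_range.2 fun y => (hmem y).2⟩ y (hmem y).1,
      ciSup_le fun y => (hmem y).2⟩

lemma one_le_lsub_iff (I : Interp) (D E : MConcept) :
    1 ≤ lsub I D E ↔ ∀ x, lval I D x ≤ lval I E x := by
  have := I.nonempty
  have hmem x := lukImp_mem (lval_mem I D x) (lval_mem I E x)
  have hbdd : BddBelow (Set.range fun x => lukImp (lval I D x) (lval I E x)) :=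
    ⟨0, Set.forall_mem_range.2 fun x => (hmem x).1⟩
  exact ⟨fun h x => one_le_lukImp_iff.1 (h.trans (ciInf_le hbdd x)),
    fun h => le_ciInf fun x => one_le_lukImp_iff.2 (h x)⟩

abbrev addDefinition (i : ℕ) (C : MConcept) (𝒜 : Finset KAxiom) : Finset KAxiom :=
  insert (KAxiom.gci (MConcept.atom i) C 1) (insert (KAxiom.gci C (MConcept.atom i) 1) 𝒜)

lemma lsatKB_addDefinition_iff (I : Interp) (i : ℕ) (C : MConcept) (𝒜 : Finset KAxiom) :
    lsatKB I (addDefinition i C 𝒜) ↔ (∀ x, I.atom i x = lval I C x) ∧ lsatKB I 𝒜 := by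
  have hgci (D E : MConcept) : lsat I (KAxiom.gci D E 1) ↔ ∀ x, lval I D x ≤ lval I E x := by
    rw [lsat, Rat.cast_one, one_le_lsub_iff]
  simp only [lsatKB, Finset.forall_mem_insert, hgci, lval, le_antisymm_iff, forall_and,
    and_assoc]

noncomputable def Interp.updateAtom (I : Interp) (i : ℕ) (C : MConcept) : Interp where
  Δ := I.Δ
  nonempty := I.nonempty
  atom i' x := if i' = i then lval I C x else I.atom i' x
  role := I.role
  ind := I.ind
  atom_mem i' x := by
    split_ifs
    exacts [lval_mem I C x, I.atom_mem i' x]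
  role_mem := I.role_mem

lemma Interp.updateAtom_eq_self {I : Interp} {i : ℕ} {C : MConcept}
    (h : ∀ x, I.atom i x = lval I C x) : I.updateAtom i C = I := by
  obtain ⟨Δ, ne, atom, role, ind, atom_mem, role_mem⟩ := I
  simp only [Interp.updateAtom, Interp.mk.injEq, heq_eq_eq, and_true, true_and]
  funext i' x
  split_ifs with hi
  · subst hi
    exact (h x).symm
  · rfl

lemma lval_updateAtom_of_not_occursC (I : Interp) {i : ℕ} (C : MConcept) {E : MConcept}
    (hE : ¬ occursC i E) (x : I.Δ) : lval (I.updateAtom i C) E x = lval I E x := by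
  induction E generalizing x with
  | atom i' => exact if_neg (Ne.symm hE)
  | top | bot => rfl
  | conj D E ihD ihE | disj D E ihD ihE =>
    simp only [occursC, not_or] at hE
    simp only [lval, ihD hE.1, ihE hE.2]
  | neg D ih => simp only [lval, ih hE]
  | all j D ih => exact iInf_congr fun y => congrArg _ (ih hE y)
  | ex j D ih => exact iSup_congr fun y => congrArg _ (ih hE y)

lemma lval_substC (I : Interp) (i : ℕ) (C E : MConcept) (x : I.Δ) :
    lval I (substC i C E) x = lval (I.updateAtom i C) E x := by
  induction E generalizing x with
  | atom i' =>
    by_cases hi : i' = i <;> simp [substC, lval, Interp.updateAtom, hi]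
  | top | bot => rfl
  | conj D E ihD ihE | disj D E ihD ihE => simp only [substC, lval, ihD, ihE]
  | neg D ih => simp only [substC, lval, ih]
  | all j D ih | ex j D ih => simp only [substC, lval, ih]; rfl

lemma lsat_substAx_iff (I : Interp) (i : ℕ) (C : MConcept) (ax : KAxiom) :
    lsat I (substAx i C ax) ↔ lsat (I.updateAtom i C) ax := by
  cases ax <;> simp only [substAx, lsat, lsub, lval_substC] <;> rfl

lemma lsatKB_image_substAx_of_lsatKB_addDefinition {I : Interp} {i : ℕ} {C : MConcept}
    {𝒜 : Finset KAxiom} (h : lsatKB I (addDefinition i C 𝒜)) :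
    lsatKB I (𝒜.image (substAx i C)) := by
  obtain ⟨hAC, h𝒜⟩ := (lsatKB_addDefinition_iff I i C 𝒜).1 h
  refine Finset.forall_mem_image.2 fun ax hax => ?_
  rw [lsat_substAx_iff, Interp.updateAtom_eq_self hAC]
  exact h𝒜 ax hax

lemma lsatKB_updateAtom_addDefinition {I : Interp} {i : ℕ} {C : MConcept}
    (hC : ¬ occursC i C) {𝒜 : Finset KAxiom} (h : lsatKB I (𝒜.image (substAx i C))) :
    lsatKB (I.updateAtom i C) (addDefinition i C 𝒜) := by
  refine (lsatKB_addDefinition_iff _ i C 𝒜).2 ⟨fun x => ?_, fun ax hax => ?_⟩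
  · exact (if_pos rfl).trans (lval_updateAtom_of_not_occursC I C hC x).symm
  · exact (lsat_substAx_iff I i C ax).1 (h _ (Finset.mem_image_of_mem _ hax))

theorem stmt17_general (i : ℕ) (C : MConcept) (hC : ¬ occursC i C)
    (𝒜 : Finset KAxiom) :
    ((∃ I : Interp, lsatKB I
        (insert (KAxiom.gci (MConcept.atom i) C 1)
          (insert (KAxiom.gci C (MConcept.atom i) 1) 𝒜))) ↔
     (∃ I : Interp, lsatKB I (𝒜.image (substAx i C)))) ∧
    ((∃ I : Interp, Finite I.Δ ∧ lsatKB I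
        (insert (KAxiom.gci (MConcept.atom i) C 1)
          (insert (KAxiom.gci C (MConcept.atom i) 1) 𝒜))) ↔
     (∃ I : Interp, Finite I.Δ ∧ lsatKB I (𝒜.image (substAx i C)))) :=
  ⟨⟨fun ⟨I, h⟩ => ⟨I, lsatKB_image_substAx_of_lsatKB_addDefinition h⟩,
    fun ⟨I, h⟩ => ⟨I.updateAtom i C, lsatKB_updateAtom_addDefinition hC h⟩⟩,
   ⟨fun ⟨I, hfin, h⟩ => ⟨I, hfin, lsatKB_image_substAx_of_lsatKB_addDefinition h⟩,
    fun ⟨I, hfin, h⟩ => ⟨I.updateAtom i C, hfin, lsatKB_updateAtom_addDefinition hC h⟩⟩⟩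

theorem stmt17 (i : ℕ) (C : MConcept) (hC : ¬ occursC i C)
    (𝒜 : Finset KAxiom) (h𝒜 : ∀ ax ∈ 𝒜, isAssertion ax)
    (h𝒜b : ∀ ax ∈ 𝒜, axBounded ax) :
    ((∃ I : Interp, lsatKB I
        (insert (KAxiom.gci (MConcept.atom i) C 1)
          (insert (KAxiom.gci C (MConcept.atom i) 1) 𝒜))) ↔
     (∃ I : Interp, lsatKB I (𝒜.image (substAx i C)))) ∧
    ((∃ I : Interp, Finite I.Δ ∧ lsatKB I
        (insert (KAxiom.gci (MConcept.atom i) C 1)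
          (insert (KAxiom.gci C (MConcept.atom i) 1) 𝒜))) ↔
     (∃ I : Interp, Finite I.Δ ∧ lsatKB I (𝒜.image (substAx i C)))) :=
  stmt17_general i C hC 𝒜
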